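/- arXiv:math/0505033 — 4 statements merged into one kernel-verified Lean document; each statement's English description precedes it below -/
import Mathlib

section
/- Let i and n be positive integers with i ≤ n, and let X₁,…,Xₙ be i.i.d. real-valued random variables with E[|X₁|^i] < ∞. For a set partition π of {1,…,i}, define the augmented monomial statistic m̃_π(X₁,…,Xₙ) = ∑_{f} ∏_{B∈π} X_{f(B)}^{|B|}, where the sum ranges over all injective functions f from the blocks of π to {1,…,n}. Then the i-th k-statistic k_i = ∑_{π∈Π_i} ((−1)^{|π|−1}(|π|−1)!/(n)_{|π|}) · m̃_π(X₁,…,Xₙ) satisfies E[k_i] = κ_i, where κ_i = ∑_{π∈Π_i} (−1)^{|π|−1}(|π|−1)! ∏_{B∈π} m_{|B|} is the i-th cumulant of X₁; that is, k_i is an unbiased estimator of the i-th cumulant. -/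
/-!
For an injective `f`, the factors `X_{f(B)}^{|B|}` are independent and distributed as
`X₁^{|B|}`, so every term of `m̃_π` has expectation `∏_{B ∈ π} m_{|B|}`. There are `(n)_{|π|}`
injective `f`, hence `E[m̃_π] = (n)_{|π|} ∏_{B ∈ π} m_{|B|}`, and the weight `1/(n)_{|π|}` in `k_i`
cancels the falling factorial, which is nonzero because `|π| ≤ i ≤ n`.
-/

open Finset MeasureTheory ProbabilityTheory

theorem Fintype.card_filter_injective {α β : Type*} [Fintype α] [Fintype β] [DecidableEq α]
    [DecidableEq β] :
    #((univ : Finset (α → β)).filter Function.Injective) = (card β).descFactorial (card α) := by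
  rw [← card_subtype, ← card_embedding_eq]
  exact card_congr (Equiv.subtypeInjectiveEquivEmbedding α β)

namespace MeasureTheory

variable {Ω : Type*} [MeasurableSpace Ω] {μ : Measure Ω}

lemma integrable_pow_of_integrable_abs_pow [IsFiniteMeasure μ] {Y : Ω → ℝ}
    (hY : AEStronglyMeasurable Y μ) {i r : ℕ} (hint : Integrable (fun ω => |Y ω| ^ i) μ)
    (hr : r ≤ i) : Integrable (fun ω => Y ω ^ r) μ := by
  have h := integrable_norm_rpow_of_le hY r.cast_nonneg i.cast_nonneg (Nat.cast_le.2 hr)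
    (by simpa only [Real.norm_eq_abs, Real.rpow_natCast] using hint)
  refine h.mono' (hY.pow r) (ae_of_all _ fun ω => ?_)
  simp only [Real.norm_eq_abs, Real.rpow_natCast, abs_pow, le_refl]

end MeasureTheory

namespace ProbabilityTheory

variable {Ω : Type*} [MeasurableSpace Ω] {μ : Measure Ω}

lemma iIndepFun.integrable_fun_prod {ι 𝕜 : Type*} [Fintype ι] [RCLike 𝕜] {Y : ι → Ω → 𝕜}
    (hY : iIndepFun Y μ) (hint : ∀ i, Integrable (Y i) μ) :
    Integrable (fun ω => ∏ i, Y i ω) μ := by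
  have := hY.isProbabilityMeasure
  have hmap := hY.map_fun_eq_pi_map fun i => (hint i).aemeasurable
  have h : Integrable (fun y : ι → 𝕜 => ∏ i, y i) (μ.map fun ω i => Y i ω) := by
    rw [hmap]
    exact Integrable.fintype_prod (f := fun _ => id) fun i =>
      (integrable_map_measure aestronglyMeasurable_id (hint i).aemeasurable).2 (hint i)
  exact h.comp_aemeasurable (aemeasurable_pi_lambda _ fun i => (hint i).aemeasurable)

variable {ι κ : Type*} {X : ι → Ω → ℝ} {Y : Ω → ℝ} {e : κ → ℕ}

lemma iIndepFun.pow_comp_injective (hindep : iIndepFun X μ) {f : κ → ι} (hf : f.Injective) :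
    iIndepFun (fun k ω => X (f k) ω ^ e k) μ :=
  (hindep.precomp hf).comp (fun k x => x ^ e k) fun _ => measurable_id.pow_const _

variable [Fintype κ]

lemma integrable_prod_pow_comp_injective (hindep : iIndepFun X μ)
    (hident : ∀ l, IdentDistrib (X l) Y μ μ) (hint : ∀ k, Integrable (fun ω => Y ω ^ e k) μ)
    {f : κ → ι} (hf : f.Injective) : Integrable (fun ω => ∏ k, X (f k) ω ^ e k) μ :=
  (hindep.pow_comp_injective hf).integrable_fun_prod
    fun k => ((hident (f k)).comp (measurable_id.pow_const (e k))).integrable_iff.2 (hint k)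

lemma integral_prod_pow_comp_injective (hindep : iIndepFun X μ)
    (hident : ∀ l, IdentDistrib (X l) Y μ μ) (hint : ∀ k, Integrable (fun ω => Y ω ^ e k) μ)
    {f : κ → ι} (hf : f.Injective) :
    ∫ ω, ∏ k, X (f k) ω ^ e k ∂μ = ∏ k, ∫ ω, Y ω ^ e k ∂μ := by
  have hpow (k : κ) := (hident (f k)).comp (measurable_id.pow_const (e k))
  rw [(hindep.pow_comp_injective hf).integral_fun_prod_eq_prod_integral
    fun k => ((hpow k).integrable_iff.2 (hint k)).aestronglyMeasurable]
  exact prod_congr rfl fun k _ => (hpow k).integral_eq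

variable [Fintype ι] [DecidableEq ι] [DecidableEq κ]

/-- The paper's `m̃_π`, with the blocks of `π` as `κ` and the block sizes as exponents `e`. -/
noncomputable def augmentedMonomial (X : ι → Ω → ℝ) (e : κ → ℕ) (ω : Ω) : ℝ :=
  ∑ f ∈ (univ : Finset (κ → ι)).filter Function.Injective, ∏ k, X (f k) ω ^ e k

lemma integrable_augmentedMonomial (hindep : iIndepFun X μ)
    (hident : ∀ l, IdentDistrib (X l) Y μ μ) (hint : ∀ k, Integrable (fun ω => Y ω ^ e k) μ) :
    Integrable (augmentedMonomial X e) μ :=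
  integrable_finsetSum _ fun _ hf =>
    integrable_prod_pow_comp_injective hindep hident hint (mem_filter.1 hf).2

lemma integral_augmentedMonomial (hindep : iIndepFun X μ)
    (hident : ∀ l, IdentDistrib (X l) Y μ μ) (hint : ∀ k, Integrable (fun ω => Y ω ^ e k) μ) :
    ∫ ω, augmentedMonomial X e ω ∂μ
      = (Fintype.card ι).descFactorial (Fintype.card κ) * ∏ k, ∫ ω, Y ω ^ e k ∂μ := by
  unfold augmentedMonomial
  rw [integral_finsetSum _ fun _ hf =>
      integrable_prod_pow_comp_injective hindep hident hint (mem_filter.1 hf).2,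
    sum_congr rfl fun _ hf =>
      integral_prod_pow_comp_injective hindep hident hint (mem_filter.1 hf).2,
    sum_const, Fintype.card_filter_injective, nsmul_eq_mul]

end ProbabilityTheory

theorem kstatistic_unbiased_for_cumulant_general
    {Ω : Type*} [MeasurableSpace Ω] (μ : Measure Ω) [IsProbabilityMeasure μ]
    (i n : ℕ) (hin : i ≤ n) (hn : 0 < n)
    (X : Fin n → Ω → ℝ)
    (hindep : iIndepFun X μ)
    (hident : ∀ l, IdentDistrib (X l) (X ⟨0, hn⟩) μ μ)
    (hint : Integrable (fun ω => |X ⟨0, hn⟩ ω| ^ i) μ) :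
    ∫ ω, (∑ π : Finpartition (univ : Finset (Fin i)),
        ((-1 : ℝ) ^ (π.parts.card - 1) * ((π.parts.card - 1).factorial : ℝ) /
            (n.descFactorial π.parts.card : ℝ)) *
          ∑ f ∈ (univ : Finset ({B // B ∈ π.parts} → Fin n)).filter Function.Injective,
            ∏ B : {B // B ∈ π.parts}, X (f B) ω ^ B.val.card) ∂μ
      = ∑ π : Finpartition (univ : Finset (Fin i)),
          (-1 : ℝ) ^ (π.parts.card - 1) * ((π.parts.card - 1).factorial : ℝ) *
            ∏ B ∈ π.parts, ∫ ω, X ⟨0, hn⟩ ω ^ B.card ∂μ := by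
  have hmoment (π : Finpartition (univ : Finset (Fin i))) (B : {B // B ∈ π.parts}) :
      Integrable (fun ω => X ⟨0, hn⟩ ω ^ B.val.card) μ :=
    integrable_pow_of_integrable_abs_pow (hident ⟨0, hn⟩).aemeasurable_snd.aestronglyMeasurable
      hint ((card_le_univ B.val).trans_eq (Fintype.card_fin i))
  have hdesc (π : Finpartition (univ : Finset (Fin i))) : (n.descFactorial π.parts.card : ℝ) ≠ 0 :=
    Nat.cast_ne_zero.2 (Nat.descFactorial_eq_zero_iff_lt.not.2
      (not_lt.2 ((π.card_parts_le_card.trans (card_fin i).le).trans hin)))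
  change ∫ ω, ∑ π : Finpartition (univ : Finset (Fin i)), _ *
      augmentedMonomial X (fun B : {B // B ∈ π.parts} => B.val.card) ω ∂μ = _
  rw [integral_finsetSum _ fun π _ =>
    (integrable_augmentedMonomial hindep hident (hmoment π)).const_mul _]
  refine sum_congr rfl fun π _ => ?_
  rw [integral_const_mul, integral_augmentedMonomial hindep hident (hmoment π), Fintype.card_fin,
    Fintype.card_coe, prod_coe_sort π.parts fun B => ∫ ω, X ⟨0, hn⟩ ω ^ B.card ∂μ]
  field_simp [hdesc π]

/-- For i.i.d. real random variables `X₁,…,Xₙ` with `E[|X₁|^i] < ∞` and `i ≤ n`,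
the `i`-th `k`-statistic
`k_i = ∑_{π ∈ Π_i} ((−1)^{|π|−1}(|π|−1)!/(n)_{|π|}) m̃_π(X)`, where
`m̃_π(X) = ∑_{f} ∏_{B ∈ π} X_{f(B)}^{|B|}` (sum over injective `f` from the blocks of `π`
to `{1,…,n}`), is an unbiased estimator of the `i`-th cumulant
`κ_i = ∑_{π ∈ Π_i} (−1)^{|π|−1}(|π|−1)! ∏_{B ∈ π} m_{|B|}`. -/
theorem kstatistic_unbiased_for_cumulant
    {Ω : Type*} [MeasurableSpace Ω] (μ : Measure Ω) [IsProbabilityMeasure μ]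
    (i n : ℕ) (hi : 0 < i) (hin : i ≤ n) (hn : 0 < n)
    (X : Fin n → Ω → ℝ) (hmeas : ∀ l, Measurable (X l))
    (hindep : iIndepFun X μ)
    (hident : ∀ l, IdentDistrib (X l) (X ⟨0, hn⟩) μ μ)
    (hint : Integrable (fun ω => |X ⟨0, hn⟩ ω| ^ i) μ) :
    ∫ ω, (∑ π : Finpartition (univ : Finset (Fin i)),
        ((-1 : ℝ) ^ (π.parts.card - 1) * ((π.parts.card - 1).factorial : ℝ) /
            (n.descFactorial π.parts.card : ℝ)) *
          ∑ f ∈ (univ : Finset ({B // B ∈ π.parts} → Fin n)).filter Function.Injective,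
            ∏ B : {B // B ∈ π.parts}, X (f B) ω ^ B.val.card) ∂μ
      = ∑ π : Finpartition (univ : Finset (Fin i)),
          (-1 : ℝ) ^ (π.parts.card - 1) * ((π.parts.card - 1).factorial : ℝ) *
            ∏ B ∈ π.parts, ∫ ω, X ⟨0, hn⟩ ω ^ B.card ∂μ :=
  kstatistic_unbiased_for_cumulant_general μ i n hin hn X hindep hident hint
end

section
/- Let R be a commutative ring, n and i positive integers, and p₁,…,p_i : {1,…,n} → R arbitrary functions. Then ∑_{f} ∏_{t=1}^{i} p_t(f(t)) = ∑_{π∈Π_i} ∏_{B∈π} (−1)^{|B|−1}(|B|−1)! · ( ∑_{l=1}^{n} ∏_{t∈B} p_t(l) ), where the left-hand sum ranges over all injective functions f : {1,…,i} → {1,…,n}. -/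
/-!
Expanding every `∑ l, ∏ t ∈ B, p t l` writes the right-hand side as `∑ g, c g * ∏ t, p t (g t)`
over all maps `g : Fin i → Fin n`, where `c g` is the sum of `∏ B ∈ π, μ #B` over the partitions
`π` whose blocks lie in fibres of `g`, and `μ k = (-1) ^ (k - 1) * (k - 1)!`. Möbius inversion in
the partition lattice gives `c g = [g injective]`. We prove this by induction, splitting off the
block `B` of a chosen element `a`: only blocks `B` inside the fibre `F` of `a` with `#(F \ B) ≤ 1`
contribute, and `μ k + (k - 1) * μ (k - 1) = 0` for `k ≥ 2`.
-/

open Finset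

namespace Finpartition

variable {α : Type*} [DecidableEq α] {s B : Finset α}

lemma parts_avoid_of_mem (P : Finpartition s) (hB : B ∈ P.parts) :
    (P.avoid B).parts = P.parts.erase B := by
  ext C
  rw [mem_avoid, mem_erase]
  constructor
  · rintro ⟨D, hD, hDB, rfl⟩
    have hDB' : D ≠ B := by rintro rfl; exact hDB le_rfl
    have hdisj : Disjoint D B := P.disjoint hD hB hDB'
    rw [sdiff_eq_self_of_disjoint hdisj]
    exact ⟨hDB', hD⟩
  · rintro ⟨hCB, hC⟩
    have hdisj : Disjoint C B := P.disjoint hC hB hCB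
    refine ⟨C, hC, fun hle => ?_, sdiff_eq_self_of_disjoint hdisj⟩
    exact P.ne_bot hC (hdisj.eq_bot_of_le hle)

lemma parts_extendOfLE_sdiff (hB : B.Nonempty) (hBs : B ⊆ s) (Q : Finpartition (s \ B)) :
    (Q.extendOfLE sdiff_le).parts = insert B Q.parts := by
  rw [parts_extendOfLE_of_lt _ (sdiff_ssubset hBs hB), _root_.sdiff_sdiff_eq_self hBs]

lemma notMem_parts_of_sdiff (hB : B.Nonempty) (Q : Finpartition (s \ B)) : B ∉ Q.parts := by
  intro h
  obtain ⟨x, hx⟩ := hB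
  exact (mem_sdiff.1 (Q.le h hx)).2 hx

lemma extendOfLE_avoid_part (P : Finpartition s) {a : α} (ha : a ∈ s) :
    (P.avoid (P.part a)).extendOfLE sdiff_le = P := by
  have hmem := P.part_mem.2 ha
  ext1
  rw [parts_extendOfLE_sdiff (P.nonempty_of_mem_parts hmem) (P.le hmem),
    parts_avoid_of_mem P hmem, insert_erase hmem]

lemma avoid_extendOfLE_sdiff (hB : B.Nonempty) (hBs : B ⊆ s) (Q : Finpartition (s \ B)) :
    (Q.extendOfLE sdiff_le).avoid B = Q := by
  have hmem : B ∈ (Q.extendOfLE sdiff_le).parts := by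
    rw [parts_extendOfLE_sdiff hB hBs]
    exact mem_insert_self _ _
  ext1
  rw [parts_avoid_of_mem _ hmem, parts_extendOfLE_sdiff hB hBs,
    erase_insert (notMem_parts_of_sdiff hB Q)]

lemma sum_eq_sum_sum_extendOfLE {M : Type*} [AddCommMonoid M] {a : α} (ha : a ∈ s)
    (f : Finpartition s → M) :
    ∑ P, f P = ∑ B ∈ s.powerset with a ∈ B, ∑ Q : Finpartition (s \ B),
      f (Q.extendOfLE sdiff_le) := by
  rw [sum_sigma']
  refine sum_nbij' (fun P => ⟨P.part a, P.avoid (P.part a)⟩)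
    (fun x => x.2.extendOfLE sdiff_le) ?_ ?_ ?_ ?_ ?_
  · intro P _
    simp [P.mem_part_self.2 ha, P.part_subset a]
  · exact fun _ _ => mem_univ _
  · exact fun P _ => extendOfLE_avoid_part P ha
  · rintro ⟨B, Q⟩ hBQ
    obtain ⟨hBs, haB⟩ : B ⊆ s ∧ a ∈ B := by simpa using hBQ
    have hB : B.Nonempty := ⟨a, haB⟩
    have hpart : (Q.extendOfLE sdiff_le).part a = B := part_eq_of_mem _
      (by rw [parts_extendOfLE_sdiff hB hBs]; exact mem_insert_self _ _) haB
    dsimp only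
    rw [hpart, avoid_extendOfLE_sdiff hB hBs]
  · intro P _
    rw [extendOfLE_avoid_part P ha]

end Finpartition

lemma Set.injOn_union_iff_of_forall_eq {α β : Type*} {s t : Set α} {g : α → β} {b : β}
    (hs : ∀ x ∈ s, g x ≠ b) (ht : ∀ x ∈ t, g x = b) :
    InjOn g (s ∪ t) ↔ InjOn g s ∧ t.Subsingleton := by
  have hdisj : Disjoint s t := Set.disjoint_left.2 fun x hxs hxt => hs x hxs (ht x hxt)
  rw [injOn_union hdisj]
  refine and_congr_right fun _ => ⟨fun h x hx y hy => h.1 hx hy ((ht x hx).trans (ht y hy).symm),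
    fun h => ⟨h.injOn g, fun x hx y hy => (ht y hy).symm ▸ hs x hx⟩⟩

namespace Finset

variable {α β : Type*} [DecidableEq β]

lemma forall_mem_eq_iff_subset_filter (g : α → β) {s B : Finset α} {a : α} (hBs : B ⊆ s)
    (haB : a ∈ B) : (∀ x ∈ B, ∀ y ∈ B, g x = g y) ↔ B ⊆ s.filter (g · = g a) :=
  ⟨fun h x hx => mem_filter.2 ⟨hBs hx, h x hx a haB⟩,
    fun h _ hx _ hy => (mem_filter.1 (h hx)).2.trans (mem_filter.1 (h hy)).2.symm⟩

variable [DecidableEq α]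

lemma injOn_sdiff_filter_union_iff (g : α → β) (s : Finset α) (a : α) {t : Finset α}
    (ht : t ⊆ s.filter (g · = g a)) :
    Set.InjOn g ↑(s \ s.filter (g · = g a) ∪ t)
      ↔ Set.InjOn g ↑(s \ s.filter (g · = g a)) ∧ #t ≤ 1 := by
  rw [coe_union, Set.injOn_union_iff_of_forall_eq (b := g a), card_le_one_iff_subsingleton]
  · intro x hx h
    exact (mem_sdiff.1 hx).2 (mem_filter.2 ⟨(mem_sdiff.1 hx).1, h⟩)
  · intro x hx
    exact (mem_filter.1 (ht hx)).2

lemma filter_powerset_card_sdiff_le_one {F : Finset α} {a : α} (ha : a ∈ F) :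
    {B ∈ F.powerset | a ∈ B ∧ #(F \ B) ≤ 1} = insert F ((F.erase a).image F.erase) := by
  ext B
  simp only [mem_filter, mem_powerset, mem_insert, mem_image, mem_erase]
  constructor
  · rintro ⟨hBF, haB, hcard⟩
    obtain h | h := Nat.le_one_iff_eq_zero_or_eq_one.1 hcard
    · exact Or.inl (hBF.antisymm (sdiff_eq_empty_iff_subset.1 (card_eq_zero.1 h)))
    · obtain ⟨x, hx⟩ := card_eq_one.1 h
      have hxFB : x ∈ F \ B := hx ▸ mem_singleton_self x
      refine Or.inr ⟨x, ⟨fun hxa => (mem_sdiff.1 hxFB).2 (hxa ▸ haB), (mem_sdiff.1 hxFB).1⟩, ?_⟩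
      rw [← sdiff_singleton_eq_erase, ← hx, _root_.sdiff_sdiff_eq_self hBF]
  · rintro (rfl | ⟨x, ⟨hxa, hxF⟩, rfl⟩)
    · simp [ha]
    · refine ⟨erase_subset x F, mem_erase.2 ⟨Ne.symm hxa, ha⟩, ?_⟩
      rw [← sdiff_singleton_eq_erase, _root_.sdiff_sdiff_eq_self (singleton_subset_iff.2 hxF),
        card_singleton]

end Finset

section PartitionMobius

variable {R : Type*} [CommRing R]

/-- `μ(0̂, 1̂)` in the lattice of partitions of a `k`-element set. -/
def partitionMobius (k : ℕ) : R := (-1) ^ (k - 1) * ((k - 1).factorial : R)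

lemma partitionMobius_one : (partitionMobius 1 : R) = 1 := by
  simp [partitionMobius]

lemma partitionMobius_add_two (k : ℕ) :
    (partitionMobius (k + 2) : R) = -(k + 1) * partitionMobius (k + 1) := by
  rw [partitionMobius, partitionMobius, show k + 2 - 1 = k + 1 from rfl, Nat.add_sub_cancel,
    Nat.factorial_succ, pow_succ]
  push_cast
  ring

variable {α β : Type*} [DecidableEq α] [DecidableEq β]

lemma sum_filter_powerset_card_sdiff_le_one {F : Finset α} {a : α} (ha : a ∈ F) :
    ∑ B ∈ F.powerset with a ∈ B ∧ #(F \ B) ≤ 1, (partitionMobius #B : R)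
      = if #F = 1 then 1 else 0 := by
  have hnotMem : F ∉ (F.erase a).image F.erase := by
    simp only [mem_image, not_exists, not_and]
    intro x hx hFx
    exact notMem_erase x F (hFx.symm ▸ mem_of_mem_erase hx)
  rw [filter_powerset_card_sdiff_le_one ha, sum_insert hnotMem,
    sum_image (F.erase_injOn.mono fun x hx => mem_of_mem_erase hx),
    sum_congr rfl fun x hx => by rw [card_erase_of_mem (mem_of_mem_erase hx)],
    sum_const, card_erase_of_mem ha, nsmul_eq_mul]
  obtain ⟨k, hk⟩ : ∃ k, #F = k + 1 := Nat.exists_eq_succ_of_ne_zero (card_ne_zero_of_mem ha)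
  rcases k with _ | k
  · simp [hk, partitionMobius_one]
  · rw [hk, Nat.add_sub_cancel, partitionMobius_add_two, if_neg (by omega)]
    push_cast
    ring

lemma sum_powerset_partitionMobius_mul_injOn (g : α → β) {s : Finset α} {a : α} (ha : a ∈ s) :
    ∑ B ∈ s.powerset with a ∈ B,
      (if ∀ x ∈ B, ∀ y ∈ B, g x = g y then (partitionMobius #B : R) else 0) *
        (if Set.InjOn g ↑(s \ B) then 1 else 0)
      = if Set.InjOn g ↑s then 1 else 0 := by
  set F := s.filter (g · = g a)
  have haF : a ∈ F := mem_filter.2 ⟨ha, rfl⟩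
  have hFs : F ⊆ s := filter_subset _ _
  have hinj : ∀ t ⊆ F, Set.InjOn g ↑(s \ F ∪ t) ↔ Set.InjOn g ↑(s \ F) ∧ #t ≤ 1 :=
    fun t => injOn_sdiff_filter_union_iff g s a
  have hsub : {B ∈ F.powerset | a ∈ B ∧ #(F \ B) ≤ 1} ⊆ {B ∈ s.powerset | a ∈ B} := by
    intro B hB
    simp only [mem_filter, mem_powerset] at hB ⊢
    exact ⟨hB.1.trans hFs, hB.2.1⟩
  rw [← sum_subset hsub]
  · have hterm : ∀ B ∈ {B ∈ F.powerset | a ∈ B ∧ #(F \ B) ≤ 1},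
        (if ∀ x ∈ B, ∀ y ∈ B, g x = g y then (partitionMobius #B : R) else 0) *
          (if Set.InjOn g ↑(s \ B) then 1 else 0)
        = partitionMobius #B * if Set.InjOn g ↑(s \ F) then 1 else 0 := by
      intro B hB
      simp only [mem_filter, mem_powerset] at hB
      obtain ⟨hBF, haB, hcard⟩ := hB
      rw [if_pos ((forall_mem_eq_iff_subset_filter g (hBF.trans hFs) haB).2 hBF),
        ← sdiff_union_sdiff_cancel hFs hBF]
      simp only [hinj _ sdiff_subset, hcard, and_true]
    have hinjs : Set.InjOn g ↑s ↔ #F = 1 ∧ Set.InjOn g ↑(s \ F) := by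
      rw [← coe_inj.2 (sdiff_union_of_subset hFs), hinj F subset_rfl, and_comm]
      exact and_congr_left' ⟨fun h => Nat.le_antisymm h (card_pos.2 ⟨a, haF⟩), le_of_eq⟩
    rw [sum_congr rfl hterm, ← sum_mul, sum_filter_powerset_card_sdiff_le_one haF,
      ite_zero_mul_ite_zero, one_mul]
    exact if_congr hinjs.symm rfl rfl
  · intro B hB hB₁
    simp only [mem_filter, mem_powerset] at hB hB₁
    obtain ⟨hBs, haB⟩ := hB
    by_cases hBF : B ⊆ F
    · have hcard : ¬#(F \ B) ≤ 1 := fun h => hB₁ ⟨hBF, haB, h⟩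
      rw [← sdiff_union_sdiff_cancel hFs hBF]
      simp only [hinj _ sdiff_subset, hcard, and_false, if_false, mul_zero]
    · rw [if_neg (mt (forall_mem_eq_iff_subset_filter g hBs haB).1 hBF), zero_mul]

theorem sum_prod_partitionMobius_eq_ite_injOn (g : α → β) (s : Finset α) :
    ∑ P : Finpartition s, ∏ B ∈ P.parts,
      (if ∀ x ∈ B, ∀ y ∈ B, g x = g y then (partitionMobius #B : R) else 0)
      = if Set.InjOn g ↑s then 1 else 0 := by
  induction s using Finset.strongInduction with | _ s ih =>
  obtain rfl | ⟨a, ha⟩ := s.eq_empty_or_nonempty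
  · rw [univ_unique (α := Finpartition (⊥ : Finset α)), sum_singleton,
      Finpartition.parts_eq_empty_iff.2 rfl, prod_empty,
      if_pos (coe_empty (α := α) ▸ Set.injOn_empty g)]
  rw [Finpartition.sum_eq_sum_sum_extendOfLE ha, ← sum_powerset_partitionMobius_mul_injOn g ha]
  refine sum_congr rfl fun B hB => ?_
  obtain ⟨hBs, haB⟩ : B ⊆ s ∧ a ∈ B := by simpa using hB
  have hB : B.Nonempty := ⟨a, haB⟩
  simp_rw [Finpartition.parts_extendOfLE_sdiff hB hBs,
    prod_insert (Finpartition.notMem_parts_of_sdiff hB _), ← mul_sum, ih _ (sdiff_ssubset hBs hB)]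

end PartitionMobius

namespace Finpartition

variable {α γ R : Type*} [Fintype α] [DecidableEq α] [Fintype γ] [DecidableEq γ]
  [CommSemiring R]

lemma prod_parts_sum_prod_eq_sum (P : Finpartition (univ : Finset α)) (q : α → γ → R) :
    ∏ B ∈ P.parts, ∑ l, ∏ t ∈ B, q t l
      = ∑ g : α → γ with ∀ B ∈ P.parts, ∀ x ∈ B, ∀ y ∈ B, g x = g y, ∏ t, q t (g t) := by
  let partOf (t : α) : P.parts := ⟨P.part t, P.part_mem.2 (mem_univ t)⟩
  let rep (B : P.parts) : α := (P.nonempty_of_mem_parts B.2).choose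
  have hrep (B : P.parts) : rep B ∈ B.1 := (P.nonempty_of_mem_parts B.2).choose_spec
  have hpartOf {B : P.parts} {t : α} (ht : t ∈ B.1) : partOf t = B :=
    Subtype.ext (P.part_eq_of_mem B.2 ht)
  rw [← prod_coe_sort, Fintype.prod_sum]
  refine sum_nbij' (fun x t => x (partOf t)) (fun g B => g (rep B)) ?_ ?_ ?_ ?_ ?_
  · intro x _
    simp only [mem_filter, mem_univ, true_and]
    intro B hB u hu v hv
    rw [hpartOf (B := ⟨B, hB⟩) hu, hpartOf (B := ⟨B, hB⟩) hv]
  · exact fun _ _ => mem_univ _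
  · intro x _
    funext B
    exact congrArg x (hpartOf (hrep B))
  · intro g hg
    funext t
    exact (mem_filter.1 hg).2 _ (partOf t).2 _ (hrep _) _ (P.mem_part (mem_univ t))
  · intro x _
    calc ∏ B : P.parts, ∏ t ∈ B.1, q t (x B)
        = ∏ B : P.parts, ∏ t ∈ B.1, q t (x (partOf t)) :=
          prod_congr rfl fun B _ => prod_congr rfl fun t ht => by rw [hpartOf ht]
      _ = ∏ B ∈ P.parts, ∏ t ∈ B, q t (x (partOf t)) :=
          prod_coe_sort P.parts fun B => ∏ t ∈ B, q t (x (partOf t))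
      _ = ∏ t ∈ P.parts.biUnion id, q t (x (partOf t)) := (prod_biUnion P.disjoint).symm
      _ = ∏ t, q t (x (partOf t)) := by rw [P.biUnion_parts]

lemma prod_parts_mul_sum_prod_eq_sum (P : Finpartition (univ : Finset α)) (w : Finset α → R)
    (q : α → γ → R) :
    ∏ B ∈ P.parts, (w B * ∑ l, ∏ t ∈ B, q t l)
      = ∑ g : α → γ, (∏ B ∈ P.parts, if ∀ x ∈ B, ∀ y ∈ B, g x = g y then w B else 0)
          * ∏ t, q t (g t) := by
  simp_rw [prod_ite_zero, ite_mul, zero_mul, ← sum_filter, ← mul_sum]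
  rw [prod_mul_distrib, prod_parts_sum_prod_eq_sum]

end Finpartition

theorem injective_sum_eq_partition_sum_general
    (R : Type*) [CommRing R] (n i : ℕ)
    (p : Fin i → Fin n → R) :
    ∑ f ∈ (univ : Finset (Fin i → Fin n)).filter Function.Injective,
        ∏ t : Fin i, p t (f t)
      = ∑ π : Finpartition (univ : Finset (Fin i)),
          ∏ B ∈ π.parts,
            ((-1 : R) ^ (B.card - 1) * ((B.card - 1).factorial : R) *
              ∑ l : Fin n, ∏ t ∈ B, p t l) := by
  calc ∑ f ∈ (univ : Finset (Fin i → Fin n)).filter Function.Injective, ∏ t, p t (f t)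
      = ∑ g : Fin i → Fin n,
          (if Set.InjOn g ↑(univ : Finset (Fin i)) then (1 : R) else 0) * ∏ t, p t (g t) := by
        rw [sum_filter]
        refine sum_congr rfl fun g _ => ?_
        rw [ite_mul, one_mul, zero_mul]
        exact if_congr (by rw [coe_univ, Set.injOn_univ]) rfl rfl
    _ = ∑ π : Finpartition (univ : Finset (Fin i)), ∏ B ∈ π.parts,
          (partitionMobius #B * ∑ l, ∏ t ∈ B, p t l) := by
        simp_rw [← sum_prod_partitionMobius_eq_ite_injOn, sum_mul]
        rw [sum_comm]
        simp only [Finpartition.prod_parts_mul_sum_prod_eq_sum]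
        -- the two sides differ only in the `Decidable` instances of the constancy conditions
        congr!

/-- For arbitrary functions `p₁,…,p_i : {1,…,n} → R`,
`∑_{f : [i] ↪ [n]} ∏_t p_t(f(t)) = ∑_{π ∈ Π_i} ∏_{B ∈ π} (−1)^{|B|−1}(|B|−1)! (∑_{l=1}^n ∏_{t ∈ B} p_t(l))`. -/
theorem injective_sum_eq_partition_sum
    (R : Type*) [CommRing R] (n i : ℕ) (hn : 0 < n) (hi : 0 < i)
    (p : Fin i → Fin n → R) :
    ∑ f ∈ (univ : Finset (Fin i → Fin n)).filter Function.Injective,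
        ∏ t : Fin i, p t (f t)
      = ∑ π : Finpartition (univ : Finset (Fin i)),
          ∏ B ∈ π.parts,
            ((-1 : R) ^ (B.card - 1) * ((B.card - 1).factorial : R) *
              ∑ l : Fin n, ∏ t ∈ B, p t l) :=
  injective_sum_eq_partition_sum_general R n i p
end

section
/- Let R be a commutative ring, n and i positive integers, and p₁,…,p_i : {1,…,n} → R arbitrary functions. Then ∏_{t=1}^{i} ( ∑_{l=1}^{n} p_t(l) ) = ∑_{π∈Π_i} ∑_{f} ∏_{B∈π} ∏_{t∈B} p_t(f(B)), where the inner sum ranges over all injective functions f from the blocks of π to {1,…,n}. -/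
/-!
Expanding the product gives `∑ g : α → β, ∏ t, p t (g t)`. A function `g` is the same thing as
the partition of its domain into the fibres of `g` together with the value of `g` on each fibre,
which is an injective function on the blocks; regrouping `∏ t, p t (g t)` block by block gives the
right-hand side.
-/

open Finset

namespace Finpartition

section Parts

variable {α : Type*} [DecidableEq α] {s : Finset α}

theorem mem_parts_iff_exists_part_eq (P : Finpartition s) {B : Finset α} :
    B ∈ P.parts ↔ ∃ a ∈ s, P.part a = B :=
  ⟨fun hB => (P.part_surjOn hB).imp fun _ ha => ⟨ha.1, ha.2⟩,
    fun ⟨_, ha, hB⟩ => hB ▸ P.part_mem.2 ha⟩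

theorem ext_part {P Q : Finpartition s} (h : ∀ a ∈ s, P.part a = Q.part a) : P = Q := by
  ext B
  simp only [mem_parts_iff_exists_part_eq]
  exact exists_congr fun a => and_congr_right fun ha => by rw [h a ha]

theorem prod_prod_parts {M : Type*} [CommMonoid M] (P : Finpartition s) (q : α → M) :
    ∏ B : P.parts, ∏ t ∈ B.1, q t = ∏ t ∈ s, q t := by
  rw [prod_coe_sort P.parts (fun B => ∏ t ∈ B, q t)]
  conv_rhs => rw [← P.biUnion_parts]
  exact (prod_biUnion P.supIndep.pairwiseDisjoint).symm

theorem sigma_injective_ext {γ : Type*}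
    {x y : Σ P : Finpartition s, {f : P.parts → γ // Function.Injective f}} (h : x.1 = y.1)
    (hxy : ∀ B (hx : B ∈ x.1.parts) (hy : B ∈ y.1.parts), x.2.1 ⟨B, hx⟩ = y.2.1 ⟨B, hy⟩) :
    x = y := by
  obtain ⟨P, f, hf⟩ := x
  obtain ⟨Q, g, hg⟩ := y
  subst h
  congr
  funext B
  exact hxy B B.2 B.2

end Parts

variable {α β : Type*} [DecidableEq α] [Fintype α]

def liftParts (P : Finpartition (univ : Finset α)) (f : P.parts → β) (a : α) : β :=
  f ⟨P.part a, P.part_mem.2 (mem_univ a)⟩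

theorem liftParts_eq_of_mem {P : Finpartition (univ : Finset α)} (f : P.parts → β) (B : P.parts)
    {a : α} (ha : a ∈ B.1) : liftParts P f a = f B :=
  congrArg f (Subtype.ext (P.part_eq_of_mem B.2 ha))

theorem prod_liftParts {M : Type*} [CommMonoid M] (P : Finpartition (univ : Finset α))
    (f : P.parts → β) (q : α → β → M) :
    ∏ t, q t (liftParts P f t) = ∏ B : P.parts, ∏ t ∈ B.1, q t (f B) := by
  rw [← prod_prod_parts P]
  exact prod_congr rfl fun B _ => prod_congr rfl fun t ht => by rw [liftParts_eq_of_mem f B ht]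

variable [DecidableEq β]

def ker (g : α → β) : Finpartition (univ : Finset α) :=
  ofSetoid (Setoid.ker g)

theorem mem_part_ker {g : α → β} {a b : α} : b ∈ (ker g).part a ↔ g a = g b :=
  mem_part_ofSetoid_iff_rel

theorem apply_eq_of_mem_parts_ker {g : α → β} {B : Finset α} (hB : B ∈ (ker g).parts)
    {a b : α} (ha : a ∈ B) (hb : b ∈ B) : g a = g b :=
  mem_part_ker.1 ((ker g).part_eq_of_mem hB ha ▸ hb)

noncomputable def kerValue (g : α → β) (B : (ker g).parts) : β :=
  g ((ker g).nonempty_of_mem_parts B.2).choose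

theorem kerValue_eq {g : α → β} (B : (ker g).parts) {a : α} (ha : a ∈ B.1) :
    kerValue g B = g a :=
  apply_eq_of_mem_parts_ker B.2 ((ker g).nonempty_of_mem_parts B.2).choose_spec ha

theorem kerValue_injective (g : α → β) : Function.Injective (kerValue g) := by
  rintro ⟨B, hB⟩ ⟨C, hC⟩ h
  obtain ⟨a, ha⟩ := (ker g).nonempty_of_mem_parts hB
  obtain ⟨c, hc⟩ := (ker g).nonempty_of_mem_parts hC
  rw [kerValue_eq _ ha, kerValue_eq _ hc] at h
  have hcB : c ∈ B := (ker g).part_eq_of_mem hB ha ▸ mem_part_ker.2 h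
  exact Subtype.ext ((ker g).eq_of_mem_parts hB hC hcB hc)

theorem liftParts_kerValue (g : α → β) : liftParts (ker g) (kerValue g) = g :=
  funext fun a => kerValue_eq _ ((ker g).mem_part (mem_univ a))

theorem ker_liftParts {P : Finpartition (univ : Finset α)} {f : P.parts → β}
    (hf : Function.Injective f) : ker (liftParts P f) = P := by
  refine ext_part fun a _ => ?_
  ext b
  rw [mem_part_ker, liftParts, liftParts, hf.eq_iff, Subtype.mk.injEq,
    P.mem_part_iff_part_eq_part (mem_univ b) (mem_univ a), eq_comm]

theorem kerValue_liftParts {P : Finpartition (univ : Finset α)} (f : P.parts → β) {B : Finset α}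
    (hB : B ∈ (ker (liftParts P f)).parts) (hB' : B ∈ P.parts) :
    kerValue (liftParts P f) ⟨B, hB⟩ = f ⟨B, hB'⟩ := by
  obtain ⟨a, ha⟩ := P.nonempty_of_mem_parts hB'
  rw [kerValue_eq _ ha, liftParts_eq_of_mem f ⟨B, hB'⟩ ha]

noncomputable def funEquivSigmaInjective :
    (α → β) ≃ Σ P : Finpartition (univ : Finset α), {f : P.parts → β // Function.Injective f} where
  toFun g := ⟨ker g, kerValue g, kerValue_injective g⟩
  invFun x := liftParts x.1 x.2.1
  left_inv := liftParts_kerValue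
  right_inv := by
    rintro ⟨P, f, hf⟩
    exact sigma_injective_ext (ker_liftParts hf) fun B hB hB' => kerValue_liftParts f hB hB'

theorem prod_sum_eq_sum_finpartition_sum_injective {R : Type*} [CommSemiring R] [Fintype β]
    (p : α → β → R) :
    ∏ t, ∑ l, p t l = ∑ P : Finpartition (univ : Finset α),
      ∑ f ∈ (univ : Finset (P.parts → β)).filter Function.Injective,
        ∏ B : P.parts, ∏ t ∈ B.1, p t (f B) := by
  calc ∏ t, ∑ l, p t l
      = ∑ g : α → β, ∏ t, p t (g t) := Fintype.prod_sum p
    _ = ∑ x : Σ P : Finpartition (univ : Finset α), {f : P.parts → β // Function.Injective f},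
          ∏ t, p t (liftParts x.1 x.2.1 t) :=
        (funEquivSigmaInjective.symm.sum_comp fun g => ∏ t, p t (g t)).symm
    _ = _ := by
      rw [Fintype.sum_sigma]
      refine sum_congr rfl fun P _ => ?_
      rw [sum_subtype _ (fun f => mem_filter_univ f)]
      exact sum_congr rfl fun f _ => prod_liftParts P f p

end Finpartition

theorem product_of_sums_eq_partition_injective_sum_general
    (R : Type*) [CommRing R] (n i : ℕ)
    (p : Fin i → Fin n → R) :
    ∏ t : Fin i, (∑ l : Fin n, p t l)
      = ∑ π : Finpartition (univ : Finset (Fin i)),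
          ∑ f ∈ (univ : Finset ({B // B ∈ π.parts} → Fin n)).filter Function.Injective,
            ∏ B : {B // B ∈ π.parts}, ∏ t ∈ B.val, p t (f B) :=
  Finpartition.prod_sum_eq_sum_finpartition_sum_injective p

/-- For arbitrary functions `p₁,…,p_i : {1,…,n} → R`,
`∏_{t=1}^i (∑_{l=1}^n p_t(l)) = ∑_{π ∈ Π_i} ∑_{f} ∏_{B ∈ π} ∏_{t ∈ B} p_t(f(B))`,
where the inner sum ranges over injective functions `f` from the blocks of `π` to `{1,…,n}`. -/
theorem product_of_sums_eq_partition_injective_sum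
    (R : Type*) [CommRing R] (n i : ℕ) (hn : 0 < n) (hi : 0 < i)
    (p : Fin i → Fin n → R) :
    ∏ t : Fin i, (∑ l : Fin n, p t l)
      = ∑ π : Finpartition (univ : Finset (Fin i)),
          ∑ f ∈ (univ : Finset ({B // B ∈ π.parts} → Fin n)).filter Function.Injective,
            ∏ B : {B // B ∈ π.parts}, ∏ t ∈ B.val, p t (f B) :=
  product_of_sums_eq_partition_injective_sum_general R n i p
end

section
/- Let R be a commutative ring, n and k positive integers, x₁,…,xₙ ∈ R, and n₁,…,n_k positive integers. Then ∑_{f} ∏_{t=1}^{k} x_{f(t)}^{n_t} = ∑_{π∈Π_k} ∏_{B∈π} (−1)^{|B|−1}(|B|−1)! · s_{m_B}(x₁,…,xₙ), where the left-hand sum ranges over all injective functions f : {1,…,k} → {1,…,n} and m_B = ∑_{t∈B} n_t. This expresses the augmented monomial symmetric polynomials in terms of products of power sum symmetric polynomials. -/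
/-!
Write `M(s, m)` for the left-hand side over the index set `s` with exponents `m`, and `p r` for
the power sums. Both sides satisfy the same recursion over the index set. An injection of
`insert a s` is an injection `f` of `s` together with a value `v ∉ range f` at `a`; summing
`x v ^ m a` over all `v` and subtracting the terms `v = f j` gives
`M(insert a s, m) = p (m a) * M(s, m) - ∑ j ∈ s, M(s, m + Pi.single j (m a))`.
A partition of `insert a s` either has `{a}` as a part or arises by adding `a` to a part `B` of a
partition of `s`. Since `#B` of the `j` lie in `B`, and `(-1)^#B #B! = -#B (-1)^(#B-1) (#B-1)!`,
the second kind contributes exactly the subtracted terms, so the partition side obeys the same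
recursion.
-/

open Finset

theorem Finset.image_sdiff_singleton_of_forall_notMem {ι : Type*} [DecidableEq ι] {a : ι}
    {X : Finset (Finset ι)} (h : ∀ C ∈ X, a ∉ C) : X.image (· \ {a}) = X := by
  conv_rhs => rw [← image_id (s := X)]
  exact image_congr fun C hC => by rw [sdiff_singleton_eq_erase, erase_eq_of_notMem (h C hC), id]

theorem Finset.sum_add_pi_single {ι M : Type*} [DecidableEq ι] [AddCommMonoid M] (m : ι → M)
    (j : ι) (c : M) (B : Finset ι) :
    ∑ t ∈ B, (m + Pi.single j c : ι → M) t = ∑ t ∈ B, m t + if j ∈ B then c else 0 := by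
  rw [← sum_pi_single' j c B, ← sum_add_distrib]
  rfl

namespace Finpartition

variable {ι : Type*} [DecidableEq ι] {s : Finset ι} {a : ι}

theorem notMem_of_mem_parts (P : Finpartition s) (ha : a ∉ s) {C : Finset ι} (hC : C ∈ P.parts) :
    a ∉ C :=
  fun h => ha (P.le hC h)

theorem notMem_of_mem_insert_empty (P : Finpartition s) (ha : a ∉ s) {B : Finset ι}
    (hB : B ∈ insert ∅ P.parts) : a ∉ B := by
  rcases mem_insert.1 hB with rfl | hB
  · exact notMem_empty a
  · exact P.notMem_of_mem_parts ha hB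

theorem insert_notMem_erase (P : Finpartition s) (ha : a ∉ s) (B C : Finset ι) :
    insert a B ∉ P.parts.erase C :=
  fun h => ha (P.le (mem_of_mem_erase h) (mem_insert_self a B))

theorem union_sup_parts_erase (P : Finpartition s) {B : Finset ι} (hB : B ∈ insert ∅ P.parts) :
    B ∪ (P.parts.erase B).sup id = s := by
  rcases mem_insert.1 hB with rfl | hB
  · rw [erase_eq_of_notMem P.empty_notMem_parts, empty_union]; exact P.sup_parts
  · conv_rhs => rw [← P.sup_parts, ← insert_erase hB, sup_insert, id, sup_eq_union]

theorem erase_empty_insert_erase (P : Finpartition s) {B : Finset ι} (hB : B ∈ insert ∅ P.parts) :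
    (insert B (P.parts.erase B)).erase ∅ = P.parts := by
  rcases mem_insert.1 hB with rfl | hB
  · rw [erase_eq_of_notMem P.empty_notMem_parts, erase_insert P.empty_notMem_parts]
  · rw [insert_erase hB, erase_eq_of_notMem P.empty_notMem_parts]

/-- Adds `a` to the part `B` of `P`; `B = ∅` stands for adding `{a}` as a new part. -/
def insertInto (P : Finpartition s) (ha : a ∉ s) {B : Finset ι} (hB : B ∈ insert ∅ P.parts) :
    Finpartition (insert a s) where
  parts := insert (insert a B) (P.parts.erase B)
  supIndep := by
    rw [supIndep_iff_pairwiseDisjoint, coe_insert]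
    refine (P.disjoint.subset (coe_subset.2 (erase_subset _ _))).insert fun C hC _ => ?_
    obtain ⟨hCB, hC⟩ := mem_erase.1 hC
    refine disjoint_insert_left.2 ⟨P.notMem_of_mem_parts ha hC, ?_⟩
    rcases mem_insert.1 hB with rfl | hB
    · exact disjoint_empty_left C
    · exact P.disjoint hB hC hCB.symm
  sup_parts := by
    rw [sup_insert, id, sup_eq_union, insert_union, P.union_sup_parts_erase hB]
  bot_notMem := by
    rw [bot_eq_empty, mem_insert, not_or]
    exact ⟨(insert_ne_empty a B).symm, fun h => P.empty_notMem_parts (mem_of_mem_erase h)⟩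

theorem insertInto_parts (P : Finpartition s) (ha : a ∉ s) {B : Finset ι}
    (hB : B ∈ insert ∅ P.parts) :
    (P.insertInto ha hB).parts = insert (insert a B) (P.parts.erase B) := rfl

def eraseInsert (σ : Finpartition (insert a s)) (ha : a ∉ s) : Finpartition s :=
  (σ.avoid {a}).copy (by rw [sdiff_singleton_eq_erase, erase_insert ha])

theorem eraseInsert_parts (σ : Finpartition (insert a s)) (ha : a ∉ s) :
    (σ.eraseInsert ha).parts = (σ.parts.image (· \ {a})).erase ∅ := rfl

theorem eraseInsert_insertInto (P : Finpartition s) (ha : a ∉ s) {B : Finset ι}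
    (hB : B ∈ insert ∅ P.parts) : (P.insertInto ha hB).eraseInsert ha = P := by
  ext1
  rw [eraseInsert_parts, insertInto_parts, image_insert, sdiff_singleton_eq_erase,
    erase_insert (P.notMem_of_mem_insert_empty ha hB), image_sdiff_singleton_of_forall_notMem
      fun C hC => P.notMem_of_mem_parts ha (mem_of_mem_erase hC), P.erase_empty_insert_erase hB]

theorem erase_part_insertInto (P : Finpartition s) (ha : a ∉ s) {B : Finset ι}
    (hB : B ∈ insert ∅ P.parts) : ((P.insertInto ha hB).part a).erase a = B := by
  rw [part_eq_of_mem _ (mem_insert_self _ _) (mem_insert_self a B),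
    erase_insert (P.notMem_of_mem_insert_empty ha hB)]

theorem erase_part_mem (σ : Finpartition (insert a s)) (ha : a ∉ s) :
    (σ.part a).erase a ∈ insert ∅ (σ.eraseInsert ha).parts := by
  rw [eraseInsert_parts, mem_insert, mem_erase, ← sdiff_singleton_eq_erase]
  by_cases h : σ.part a \ {a} = ∅
  · exact Or.inl h
  · exact Or.inr ⟨h, mem_image_of_mem _ (σ.part_mem.2 (mem_insert_self a s))⟩

theorem insertInto_eraseInsert (σ : Finpartition (insert a s)) (ha : a ∉ s) :
    (σ.eraseInsert ha).insertInto ha (σ.erase_part_mem ha) = σ := by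
  have hA : σ.part a ∈ σ.parts := σ.part_mem.2 (mem_insert_self a s)
  have haA : a ∈ σ.part a := σ.mem_part_self.2 (mem_insert_self a s)
  have hother : ∀ C ∈ σ.parts.erase (σ.part a), a ∉ C := fun C hC haC =>
    ne_of_mem_erase hC (σ.eq_of_mem_parts (mem_of_mem_erase hC) hA haC haA)
  have himage :
      σ.parts.image (· \ {a}) = insert ((σ.part a).erase a) (σ.parts.erase (σ.part a)) := by
    conv_lhs => rw [← insert_erase hA]
    rw [image_insert, sdiff_singleton_eq_erase, image_sdiff_singleton_of_forall_notMem hother]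
  have hE : (σ.part a).erase a ∉ σ.parts.erase (σ.part a) := by
    intro hE
    obtain ⟨t, ht⟩ := σ.nonempty_of_mem_parts (mem_of_mem_erase hE)
    exact ne_of_mem_erase hE (σ.eq_of_mem_parts (mem_of_mem_erase hE) hA ht (mem_of_mem_erase ht))
  ext1
  rw [insertInto_parts, eraseInsert_parts, himage, erase_right_comm, erase_insert hE,
    erase_eq_of_notMem fun h => σ.empty_notMem_parts (mem_of_mem_erase h), insert_erase haA,
    insert_erase hA]

theorem sum_prod_parts_insert {M : Type*} [CommSemiring M] (ha : a ∉ s) (w : Finset ι → M) :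
    ∑ σ : Finpartition (insert a s), ∏ C ∈ σ.parts, w C =
      ∑ P : Finpartition s, ∑ B ∈ insert ∅ P.parts,
        w (insert a B) * ∏ C ∈ P.parts.erase B, w C := by
  rw [← sum_sigma univ (fun P : Finpartition s => insert ∅ P.parts)
    fun p => w (insert a p.2) * ∏ C ∈ p.1.parts.erase p.2, w C]
  symm
  refine sum_bij' (fun p hp => p.1.insertInto ha (mem_sigma.1 hp).2)
    (fun σ _ => ⟨σ.eraseInsert ha, (σ.part a).erase a⟩) (fun _ _ => mem_univ _)
    (fun σ _ => mem_sigma.2 ⟨mem_univ _, σ.erase_part_mem ha⟩) ?_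
    (fun σ _ => σ.insertInto_eraseInsert ha) ?_
  · rintro ⟨P, B⟩ hB
    exact Sigma.ext (P.eraseInsert_insertInto ha _) (heq_of_eq (P.erase_part_insertInto ha _))
  · rintro ⟨P, B⟩ hB
    rw [insertInto_parts, prod_insert (P.insert_notMem_erase ha B B)]

end Finpartition

section AugmentedMonomial

variable {R α ι κ : Type*} [CommRing R] [Fintype α] [Fintype ι] [Fintype κ]

def powerSum (x : α → R) (r : ℕ) : R := ∑ l, x l ^ r

noncomputable def augmentedMonomial (x : α → R) (m : ι → ℕ) : R := ∑ f : ι ↪ α, ∏ t, x (f t) ^ m t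

theorem sum_filter_injective_eq_augmentedMonomial [DecidableEq ι] [DecidableEq α] (x : α → R)
    (m : ι → ℕ) :
    ∑ f ∈ (univ : Finset (ι → α)).filter Function.Injective, ∏ t, x (f t) ^ m t
      = augmentedMonomial x m := by
  rw [sum_subtype _ (fun f => by rw [mem_filter, and_iff_right (mem_univ f)])]
  exact Fintype.sum_equiv (Equiv.subtypeInjectiveEquivEmbedding ι α) _ _ fun f => rfl

theorem augmentedMonomial_comp_equiv (x : α → R) (e : κ ≃ ι) (m : ι → ℕ) :
    augmentedMonomial x (m ∘ e) = augmentedMonomial x m :=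
  Fintype.sum_equiv (e.embeddingCongr (Equiv.refl α)) _ _ fun f =>
    Fintype.prod_equiv e _ _ fun t => by simp [Equiv.embeddingCongr_apply]

theorem augmentedMonomial_of_isEmpty [IsEmpty ι] (x : α → R) (m : ι → ℕ) :
    augmentedMonomial x m = 1 := by
  simp [augmentedMonomial]

theorem Function.Embedding.sum_compl_range [DecidableEq α] {M : Type*} [AddCommGroup M]
    (f : ι ↪ α) (g : α → M) : ∑ v : ↥(Set.range f)ᶜ, g v = ∑ v, g v - ∑ t, g (f t) := by
  classical
  have hrange : ∑ v : Set.range f, g v = ∑ t, g (f t) :=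
    (Fintype.sum_equiv (Equiv.ofInjective f f.injective) _ _ fun t => rfl).symm
  rw [eq_sub_iff_add_eq, ← hrange, add_comm]
  convert Fintype.sum_subtype_add_sum_subtype (· ∈ Set.range f) g

theorem Fintype.prod_pow_add_single [DecidableEq ι] (y : ι → R) (m : ι → ℕ) (j : ι) (c : ℕ) :
    ∏ t, y t ^ (m + Pi.single j c : ι → ℕ) t = y j ^ c * ∏ t, y t ^ m t := by
  simp only [Pi.add_apply, pow_add, prod_mul_distrib]
  rw [mul_comm]
  congr 1
  rw [Fintype.prod_eq_single j fun t ht => by simp [ht]]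
  simp

theorem augmentedMonomial_option [DecidableEq α] [DecidableEq ι] (x : α → R) (m : Option ι → ℕ) :
    augmentedMonomial x m = powerSum x (m none) * augmentedMonomial x (m ∘ some)
      - ∑ j, augmentedMonomial x (m ∘ some + Pi.single j (m none)) := by
  calc augmentedMonomial x m
      = ∑ f : ι ↪ α, (∑ v : ↥(Set.range f)ᶜ, x v ^ m none) * ∏ t, x (f t) ^ m (some t) := by
        simp only [sum_mul]
        rw [augmentedMonomial, ← Fintype.sum_sigma (fun p : Σ f : ι ↪ α, ↥(Set.range f)ᶜ =>
          x p.2 ^ m none * ∏ t, x (p.1 t) ^ m (some t))]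
        exact Fintype.sum_equiv (Function.Embedding.optionEmbeddingEquiv ι α) _ _
          fun e => Fintype.prod_option _
    _ = ∑ f : ι ↪ α, (powerSum x (m none) - ∑ j, x (f j) ^ m none) * ∏ t, x (f t) ^ m (some t) :=
        sum_congr rfl fun f _ => by rw [f.sum_compl_range (fun v => x v ^ m none), powerSum]
    _ = _ := by
        simp only [sub_mul, sum_sub_distrib, ← mul_sum, sum_mul]
        rw [sum_comm]
        congr 1
        exact sum_congr rfl fun j _ => sum_congr rfl fun f _ =>
          (Fintype.prod_pow_add_single (fun t => x (f t)) (m ∘ some) j (m none)).symm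

end AugmentedMonomial

section PartitionExpansion

variable {R ι : Type*} [CommRing R] [DecidableEq ι]

def blockWeight (p : ℕ → R) (m : ι → ℕ) (B : Finset ι) : R :=
  (-1) ^ (#B - 1) * ((#B - 1).factorial : R) * p (∑ t ∈ B, m t)

def partitionExpansion (p : ℕ → R) (m : ι → ℕ) (s : Finset ι) : R :=
  ∑ π : Finpartition s, ∏ B ∈ π.parts, blockWeight p m B

theorem blockWeight_add_single_of_notMem (p : ℕ → R) (m : ι → ℕ) {j : ι} (c : ℕ) {B : Finset ι}
    (hj : j ∉ B) : blockWeight p (m + Pi.single j c) B = blockWeight p m B := by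
  rw [blockWeight, sum_add_pi_single, if_neg hj, add_zero, blockWeight]

theorem sum_blockWeight_add_single (p : ℕ → R) (m : ι → ℕ) {a : ι} {B : Finset ι} (haB : a ∉ B)
    (hB : B.Nonempty) :
    ∑ j ∈ B, blockWeight p (m + Pi.single j (m a)) B = -blockWeight p m (insert a B) := by
  obtain ⟨k, hk⟩ : ∃ k, #B = k + 1 := Nat.exists_eq_add_one.2 hB.card_pos
  have hterm : ∀ j ∈ B, blockWeight p (m + Pi.single j (m a)) B
      = (-1) ^ k * (k.factorial : R) * p (∑ t ∈ insert a B, m t) := fun j hj => by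
    rw [blockWeight, sum_add_pi_single, if_pos hj, sum_insert haB, add_comm (m a), hk,
      Nat.add_sub_cancel]
  rw [sum_congr rfl hterm, sum_const, hk, blockWeight, card_insert_of_notMem haB, hk,
    Nat.add_sub_cancel, Nat.factorial_succ, nsmul_eq_mul]
  push_cast
  ring

theorem partitionExpansion_empty (p : ℕ → R) (m : ι → ℕ) : partitionExpansion p m ∅ = 1 := by
  have : Unique (Finpartition (∅ : Finset ι)) := inferInstanceAs (Unique (Finpartition ⊥))
  rw [partitionExpansion, Fintype.sum_unique, Finpartition.parts_eq_empty_iff.2 rfl, prod_empty]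

theorem sum_prod_blockWeight_add_single {s : Finset ι} {a : ι} (ha : a ∉ s) (p : ℕ → R)
    (m : ι → ℕ) (P : Finpartition s) :
    ∑ j ∈ s, ∏ C ∈ P.parts, blockWeight p (m + Pi.single j (m a)) C
      = -∑ B ∈ P.parts,
          blockWeight p m (insert a B) * ∏ C ∈ P.parts.erase B, blockWeight p m C := by
  rw [← sum_neg_distrib, ← sum_congr P.biUnion_parts (fun _ _ => rfl), sum_biUnion P.disjoint]
  refine sum_congr rfl fun B hB => ?_
  rw [id_eq]
  have hj : ∀ j ∈ B, ∏ C ∈ P.parts, blockWeight p (m + Pi.single j (m a)) C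
      = blockWeight p (m + Pi.single j (m a)) B * ∏ C ∈ P.parts.erase B, blockWeight p m C :=
    fun j hj => by
      rw [← mul_prod_erase _ _ hB]
      congr 1
      refine prod_congr rfl fun C hC => blockWeight_add_single_of_notMem p m _ fun hjC => ?_
      exact ne_of_mem_erase hC (P.eq_of_mem_parts (mem_of_mem_erase hC) hB hjC hj)
  rw [sum_congr rfl hj, ← sum_mul, sum_blockWeight_add_single p m (P.notMem_of_mem_parts ha hB)
    (P.nonempty_of_mem_parts hB), neg_mul]

theorem partitionExpansion_insert {s : Finset ι} {a : ι} (ha : a ∉ s) (p : ℕ → R) (m : ι → ℕ) :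
    partitionExpansion p m (insert a s) = p (m a) * partitionExpansion p m s
      - ∑ j ∈ s, partitionExpansion p (m + Pi.single j (m a)) s := by
  simp only [partitionExpansion, Finpartition.sum_prod_parts_insert ha, mul_sum]
  rw [sum_comm, ← sum_sub_distrib]
  refine sum_congr rfl fun P _ => ?_
  rw [sum_insert P.empty_notMem_parts, erase_eq_of_notMem P.empty_notMem_parts,
    sum_prod_blockWeight_add_single ha, sub_neg_eq_add]
  simp [blockWeight]

end PartitionExpansion

theorem augmentedMonomial_eq_partitionExpansion {R α ι : Type*} [CommRing R] [Fintype α]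
    [DecidableEq α] [DecidableEq ι] (x : α → R) (s : Finset ι) (m : ι → ℕ) :
    augmentedMonomial x (fun t : s => m t) = partitionExpansion (powerSum x) m s := by
  induction s using Finset.induction_on generalizing m with
  | empty => rw [augmentedMonomial_of_isEmpty, partitionExpansion_empty]
  | insert a s ha ih =>
    have hsingle : ∀ j : s, (fun t : s => m t) + Pi.single j (m a)
        = fun t : s => (m + Pi.single (j : ι) (m a) : ι → ℕ) t := fun j =>
      funext fun t => by simp only [Pi.add_apply, Pi.single_apply, Subtype.ext_iff]
    rw [← augmentedMonomial_comp_equiv x (subtypeInsertEquivOption ha).symm,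
      augmentedMonomial_option, partitionExpansion_insert ha, ← ih, ← sum_coe_sort s]
    refine congrArg₂ (· - ·) rfl (sum_congr rfl fun j _ => ?_)
    rw [← ih, ← hsingle]
    -- `(subtypeInsertEquivOption ha).symm` sends `none` to `a` and `some t` to `t` by definition.
    rfl

theorem augmented_monomial_in_terms_of_power_sums_general
    (R : Type*) [CommRing R] (n k : ℕ)
    (x : Fin n → R) (nn : Fin k → ℕ) :
    ∑ f ∈ (univ : Finset (Fin k → Fin n)).filter Function.Injective,
        ∏ t : Fin k, x (f t) ^ nn t
      = ∑ π : Finpartition (univ : Finset (Fin k)),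
          ∏ B ∈ π.parts,
            ((-1 : R) ^ (B.card - 1) * ((B.card - 1).factorial : R) *
              ∑ l : Fin n, x l ^ (∑ t ∈ B, nn t)) := by
  rw [sum_filter_injective_eq_augmentedMonomial,
    ← augmentedMonomial_comp_equiv x (Equiv.subtypeUnivEquiv mem_univ)]
  exact augmentedMonomial_eq_partitionExpansion x univ nn

/-- For `x₁,…,xₙ ∈ R` and positive integers `n₁,…,n_k`,
`∑_{f : [k] ↪ [n]} ∏_t x_{f(t)}^{n_t}
   = ∑_{π ∈ Π_k} ∏_{B ∈ π} (−1)^{|B|−1}(|B|−1)! · s_{m_B}(x)`, with `m_B = ∑_{t ∈ B} n_t`: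
augmented monomial symmetric polynomials in terms of power sums. -/
theorem augmented_monomial_in_terms_of_power_sums
    (R : Type*) [CommRing R] (n k : ℕ) (hn : 0 < n) (hk : 0 < k)
    (x : Fin n → R) (nn : Fin k → ℕ) (hnn : ∀ t, 0 < nn t) :
    ∑ f ∈ (univ : Finset (Fin k → Fin n)).filter Function.Injective,
        ∏ t : Fin k, x (f t) ^ nn t
      = ∑ π : Finpartition (univ : Finset (Fin k)),
          ∏ B ∈ π.parts,
            ((-1 : R) ^ (B.card - 1) * ((B.card - 1).factorial : R) *
              ∑ l : Fin n, x l ^ (∑ t ∈ B, nn t)) :=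
  augmented_monomial_in_terms_of_power_sums_general R n k x nn
end
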